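/- Let E be an equational system and > a reduction order total on ground terms, such that for every equation s ≈ t in E either s > t or t ≈ s ∈ E. If for every extended critical pair s ≈ t in ECP_>(E), either s and t are joinable with respect to E^>, or s ≈ t is an instance of an equation in the symmetric closure of E, then the ordered rewrite system E^> is ground confluent (confluent on ground terms). -/

import Mathlib

/-- First-order terms over a signature `F` with natural-number variables. -/
inductive Term (F : Type) : Type
  | var : ℕ → Term F
  | fn : F → List (Term F) → Term F

namespace Term

mutual
/-- Application of a substitution to a term. -/
def subst {F : Type} (σ : ℕ → Term F) : Term F → Term F
  | var x => σ x
  | fn f ts => fn f (substL σ ts)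
/-- Application of a substitution to a list of terms. -/
def substL {F : Type} (σ : ℕ → Term F) : List (Term F) → List (Term F)
  | [] => []
  | t :: ts => subst σ t :: substL σ ts
end

/-- Ground terms: terms without variables. -/
inductive IsGround {F : Type} : Term F → Prop
  | fn : ∀ (f : F) (ts : List (Term F)), (∀ t ∈ ts, IsGround t) → IsGround (fn f ts)

/-- Well-formed terms with respect to an arity function. -/
inductive WF {F : Type} (ar : F → ℕ) : Term F → Prop
  | var : ∀ x, WF ar (var x)
  | fn : ∀ (f : F) (ts : List (Term F)), ts.length = ar f →
      (∀ t ∈ ts, WF ar t) → WF ar (fn f ts)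

/-- The variable `x` occurs in a term. -/
inductive Occurs {F : Type} (x : ℕ) : Term F → Prop
  | var : Occurs x (var x)
  | fn : ∀ {f ts t}, t ∈ ts → Occurs x t → Occurs x (fn f ts)

end Term

open Term

/-- A substitution is a renaming (variable permutation) if it is given by a
bijection on variables. -/
def IsRenaming {F : Type} (π : ℕ → Term F) : Prop :=
  ∃ ρ : ℕ ≃ ℕ, ∀ x, π x = Term.var (ρ x)

/-- One-step rewrite relation generated by a set of rules: closure of the
rules under substitutions and contexts. -/
inductive Rew {F : Type} (R : Set (Term F × Term F)) : Term F → Term F → Prop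
  | rule : ∀ {l r : Term F}, (l, r) ∈ R → ∀ (σ : ℕ → Term F),
      Rew R (subst σ l) (subst σ r)
  | ctxt : ∀ {s t : Term F} (f : F) (as bs : List (Term F)), Rew R s t →
      Rew R (fn f (as ++ s :: bs)) (fn f (as ++ t :: bs))

/-- Symmetric closure of a set of equations. -/
def symcl {F : Type} (E : Set (Term F × Term F)) : Set (Term F × Term F) :=
  E ∪ {p | (p.2, p.1) ∈ E}

/-- `E^>`: all orientable instances of equations in the symmetric closure of `E`. -/
def ordInst {F : Type} (gt : Term F → Term F → Prop)
    (E : Set (Term F × Term F)) : Set (Term F × Term F) :=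
  {p | ∃ (u v : Term F) (σ : ℕ → Term F), (u, v) ∈ symcl E ∧
    p = (subst σ u, subst σ v) ∧ gt (subst σ u) (subst σ v)}

/-- Many-step rewriting. -/
def RStar {F : Type} (S : Set (Term F × Term F)) : Term F → Term F → Prop :=
  Relation.ReflTransGen (Rew S)

/-- Conversion: reflexive-transitive closure of rewriting in both directions. -/
def Conv {F : Type} (S : Set (Term F × Term F)) : Term F → Term F → Prop :=
  Relation.ReflTransGen (fun a b => Rew S a b ∨ Rew S b a)

/-- Joinability. -/
def Joinable {F : Type} (S : Set (Term F × Term F)) (s t : Term F) : Prop :=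
  ∃ u, RStar S s u ∧ RStar S t u

/-- Termination of an abstract relation. -/
def Terminating {A : Type} (r : A → A → Prop) : Prop :=
  WellFounded (fun a b => r b a)

/-- A reduction order: well-founded strict order on terms closed under
contexts and substitutions. -/
structure RedOrder (F : Type) where
  gt : Term F → Term F → Prop
  wf : WellFounded fun s t => gt t s
  trans : ∀ {s t u}, gt s t → gt t u → gt s u
  irrefl : ∀ s, ¬ gt s s
  subst_mono : ∀ {s t} (σ : ℕ → Term F), gt s t → gt (subst σ s) (subst σ t)
  ctxt_mono : ∀ {s t} (f : F) (as bs : List (Term F)), gt s t →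
      gt (fn f (as ++ s :: bs)) (fn f (as ++ t :: bs))

/-- Ground-totality of an order. -/
def GroundTotal {F : Type} (gt : Term F → Term F → Prop) : Prop :=
  ∀ s t : Term F, IsGround s → IsGround t → s ≠ t → gt s t ∨ gt t s

/-- Subterm at a position. -/
inductive SubtAt {F : Type} : Term F → List ℕ → Term F → Prop
  | refl : ∀ t, SubtAt t [] t
  | step : ∀ {f : F} {ts : List (Term F)} {i u p v},
      ts[(i : ℕ)]? = some u → SubtAt u p v → SubtAt (fn f ts) (i :: p) v

/-- Replacement of the subterm at a position. -/
inductive ReplAt {F : Type} : Term F → List ℕ → Term F → Term F → Prop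
  | refl : ∀ t u, ReplAt t [] u u
  | step : ∀ {f : F} {ts : List (Term F)} {i u p v u'},
      ts[(i : ℕ)]? = some u → ReplAt u p v u' →
      ReplAt (fn f ts) (i :: p) v (fn f (ts.set i u'))

/-- Extended critical pairs of a set of equations w.r.t. an order. -/
def ECP {F : Type} (gt : Term F → Term F → Prop)
    (E : Set (Term F × Term F)) : Set (Term F × Term F) :=
  {p | ∃ (e₁ e₂ : Term F × Term F) (π₁ π₂ μ : ℕ → Term F)
        (pos : List ℕ) (lsub l₂c : Term F),
    e₁ ∈ symcl E ∧ e₂ ∈ symcl E ∧ IsRenaming π₁ ∧ IsRenaming π₂ ∧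
    -- the variants are variable disjoint
    (∀ x, (Occurs x (subst π₁ e₁.1) ∨ Occurs x (subst π₁ e₁.2)) →
          ¬ (Occurs x (subst π₂ e₂.1) ∨ Occurs x (subst π₂ e₂.2))) ∧
    -- a function-symbol position of l₂
    SubtAt (subst π₂ e₂.1) pos lsub ∧ (∀ x, lsub ≠ Term.var x) ∧
    -- μ is a most general unifier of l₁ and l₂|_pos
    subst μ (subst π₁ e₁.1) = subst μ lsub ∧
    (∀ θ : ℕ → Term F, subst θ (subst π₁ e₁.1) = subst θ lsub →
      ∃ δ : ℕ → Term F, ∀ x, θ x = subst δ (subst μ (Term.var x))) ∧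
    -- orientation conditions
    ¬ gt (subst μ (subst π₁ e₁.2)) (subst μ (subst π₁ e₁.1)) ∧
    ¬ gt (subst μ (subst π₂ e₂.2)) (subst μ (subst π₂ e₂.1)) ∧
    -- the extended critical pair l₂[r₁]_pos μ ≈ r₂ μ
    ReplAt (subst π₂ e₂.1) pos (subst π₁ e₁.2) l₂c ∧
    p = (subst μ l₂c, subst μ (subst π₂ e₂.2))}

/-- The inference system oKB of ordered completion. -/
inductive OKB {F : Type} (gt : Term F → Term F → Prop) :
    Set (Term F × Term F) × Set (Term F × Term F) →
    Set (Term F × Term F) × Set (Term F × Term F) → Prop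
  | deduce : ∀ E R (s t u : Term F) (π : ℕ → Term F), IsRenaming π →
      Rew (R ∪ E) u s → Rew (R ∪ E) u t →
      OKB gt (E, R) (insert (subst π s, subst π t) E, R)
  | orient_lr : ∀ E R (s t : Term F) (π : ℕ → Term F), IsRenaming π → gt s t →
      OKB gt (insert (s, t) E, R) (E, insert (subst π s, subst π t) R)
  | orient_rl : ∀ E R (s t : Term F) (π : ℕ → Term F), IsRenaming π → gt t s →
      OKB gt (insert (s, t) E, R) (E, insert (subst π t, subst π s) R)
  | delete : ∀ E R (s : Term F), OKB gt (insert (s, s) E, R) (E, R)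
  | compose : ∀ E R (s t u : Term F) (π : ℕ → Term F), IsRenaming π →
      Rew (insert (s, t) R ∪ ordInst gt E) t u →
      OKB gt (E, insert (s, t) R) (E, insert (subst π s, subst π u) R)
  | simplify_l : ∀ E R (s t u : Term F) (π : ℕ → Term F), IsRenaming π →
      Rew (R ∪ ordInst gt (insert (s, t) E)) s u →
      OKB gt (insert (s, t) E, R) (insert (subst π u, subst π t) E, R)
  | simplify_r : ∀ E R (s t u : Term F) (π : ℕ → Term F), IsRenaming π →
      Rew (R ∪ ordInst gt (insert (s, t) E)) t u →
      OKB gt (insert (s, t) E, R) (insert (subst π s, subst π u) E, R)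
  | collapse : ∀ E R (s t u : Term F) (π : ℕ → Term F), IsRenaming π →
      Rew (insert (t, s) R ∪ ordInst gt E) t u →
      OKB gt (E, insert (t, s) R) (insert (subst π u, subst π s) E, R)

/-- Lexicographic extension of a relation to (equal-length) lists. -/
inductive LexExt {A : Type} (r : A → A → Prop) : List A → List A → Prop
  | head : ∀ {a b : A} {as bs : List A}, r a b → as.length = bs.length →
      LexExt r (a :: as) (b :: bs)
  | tail : ∀ {a : A} {as bs : List A}, LexExt r as bs →
      LexExt r (a :: as) (a :: bs)

/-- The lexicographic path order induced by a precedence. -/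
inductive LPO {F : Type} (p : F → F → Prop) : Term F → Term F → Prop
  | sub : ∀ {f ss s t}, s ∈ ss → LPO p s t → LPO p (fn f ss) t
  | subeq : ∀ {f ss t}, t ∈ ss → LPO p (fn f ss) t
  | prec : ∀ {f g ss ts}, p f g → (∀ t ∈ ts, LPO p (fn f ss) t) →
      LPO p (fn f ss) (fn g ts)
  | lex : ∀ {f ss ts}, (∀ t ∈ ts, LPO p (fn f ss) t) → LexExt (LPO p) ss ts →
      LPO p (fn f ss) (fn f ts)

mutual
/-- Weight of a term. -/
def wt {F : Type} (w : F → ℕ) (w0 : ℕ) : Term F → ℕ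
  | Term.var _ => w0
  | Term.fn f ts => w f + wtL w w0 ts
/-- Sum of the weights of a list of terms. -/
def wtL {F : Type} (w : F → ℕ) (w0 : ℕ) : List (Term F) → ℕ
  | [] => 0
  | t :: ts => wt w w0 t + wtL w w0 ts
end

/-- The Knuth–Bendix order on ground terms. -/
inductive KBO {F : Type} (p : F → F → Prop) (w : F → ℕ) (w0 : ℕ) :
    Term F → Term F → Prop
  | wgt : ∀ {f g ss ts}, wt w w0 (fn f ss) > wt w w0 (fn g ts) →
      KBO p w w0 (fn f ss) (fn g ts)
  | prec : ∀ {f g ss ts}, wt w w0 (fn f ss) = wt w w0 (fn g ts) → p f g →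
      KBO p w w0 (fn f ss) (fn g ts)
  | lex : ∀ {f ss ts}, wt w w0 (fn f ss) = wt w w0 (fn f ts) →
      LexExt (KBO p w w0) ss ts → KBO p w w0 (fn f ss) (fn f ts)

/-- Admissibility of a weight function for a precedence. -/
def Admissible {F : Type} (ar : F → ℕ) (p : F → F → Prop)
    (w : F → ℕ) (w0 : ℕ) : Prop :=
  0 < w0 ∧ (∀ c, ar c = 0 → w0 ≤ w c) ∧
  (∀ f, ar f = 1 → w f = 0 → ∀ g, g ≠ f → p f g)

/-!
E^> is contained in the reduction order, so it terminates, and since a reduction order never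
introduces variables, ground terms rewrite to ground terms. By Newman's lemma it is therefore
enough to join local peaks `u ← t → v` with `t` ground. Steps at parallel positions commute and
nested steps reduce to a peak with one step at the root, `rσ ← lσ → v`. If the inner step lies
below a variable `x` of `l`, rewriting the remaining occurrences of `x` leads to `rσ'` and `lσ'`,
a ground instance of an equation, and by ground totality such an instance is either trivial or
itself a step of E^>. Otherwise the step overlaps `l` at a function position; after renaming
apart, the most general unifier exhibits the peak as an instance of an extended critical pair,
and either alternative of the hypothesis joins it (again by ground totality in the second case).
-/

theorem newman {α : Type*} {r : α → α → Prop} {P : α → Prop} (hwf : WellFounded (flip r))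
    (hP : ∀ {a b}, P a → r a b → P b)
    (hlc : ∀ {a b c}, P a → r a b → r a c → Relation.Join (Relation.ReflTransGen r) b c)
    {a b c : α} (ha : P a) (hab : Relation.ReflTransGen r a b)
    (hac : Relation.ReflTransGen r a c) : Relation.Join (Relation.ReflTransGen r) b c := by
  induction a using hwf.induction generalizing b c with
  | _ a ih =>
  rcases hab.cases_head with rfl | ⟨b₁, hab₁, hb₁b⟩
  · exact ⟨c, hac, .refl⟩
  rcases hac.cases_head with rfl | ⟨c₁, hac₁, hc₁c⟩
  · exact ⟨b, .refl, hab⟩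
  obtain ⟨d, hb₁d, hc₁d⟩ := hlc ha hab₁ hac₁
  obtain ⟨e, hbe, hde⟩ := ih b₁ hab₁ (hP ha hab₁) hb₁b hb₁d
  obtain ⟨g, hcg, heg⟩ := ih c₁ hac₁ (hP ha hac₁) hc₁c (hc₁d.trans hde)
  exact ⟨g, hbe.trans heg, hcg⟩

namespace Term

variable {F : Type}

@[elab_as_elim]
theorem ind {motive : Term F → Prop} (var : ∀ x, motive (var x))
    (fn : ∀ f ts, (∀ t ∈ ts, motive t) → motive (fn f ts)) : ∀ t, motive t
  | .var x => var x
  | .fn f ts => fn f ts fun t _ => ind var fn t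

theorem substL_eq_map (σ : ℕ → Term F) : ∀ ts : List (Term F), substL σ ts = ts.map (subst σ)
  | [] => rfl
  | t :: ts => by rw [substL, List.map_cons, substL_eq_map]

@[simp] theorem subst_var (σ : ℕ → Term F) (x : ℕ) : subst σ (var x) = σ x := rfl

@[simp] theorem subst_fn (σ : ℕ → Term F) (f : F) (ts : List (Term F)) :
    subst σ (fn f ts) = fn f (ts.map (subst σ)) := by
  rw [subst, substL_eq_map]

theorem subst_comp (σ τ : ℕ → Term F) (t : Term F) :
    subst σ (subst τ t) = subst (fun x => subst σ (τ x)) t := by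
  induction t using Term.ind with
  | var x => rfl
  | fn f ts ih =>
    simp only [subst_fn, List.map_map, fn.injEq, true_and]
    exact List.map_congr_left ih

theorem subst_congr {σ σ' : ℕ → Term F} {t : Term F} (h : ∀ x, Occurs x t → σ x = σ' x) :
    subst σ t = subst σ' t := by
  induction t using Term.ind with
  | var x => exact h x Occurs.var
  | fn f ts ih =>
    simp only [subst_fn, fn.injEq, true_and]
    exact List.map_congr_left fun t ht => ih t ht fun x hx => h x (Occurs.fn ht hx)

theorem subst_id (t : Term F) : subst var t = t := by
  induction t using Term.ind with
  | var x => rfl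
  | fn f ts ih => simpa using List.map_congr_left ih

theorem occurs_var_iff {x y : ℕ} : Occurs (F := F) x (var y) ↔ x = y :=
  ⟨fun h => by cases h; rfl, fun h => h ▸ Occurs.var⟩

theorem occurs_fn_iff {x : ℕ} {f : F} {ts : List (Term F)} :
    Occurs x (fn f ts) ↔ ∃ t ∈ ts, Occurs x t :=
  ⟨fun h => by cases h with | fn ht hx => exact ⟨_, ht, hx⟩, fun ⟨_, ht, hx⟩ => Occurs.fn ht hx⟩

theorem occurs_subst_iff {x : ℕ} {σ : ℕ → Term F} {t : Term F} :
    Occurs x (subst σ t) ↔ ∃ y, Occurs y t ∧ Occurs x (σ y) := by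
  induction t using Term.ind with
  | var z => simp only [subst_var, occurs_var_iff, exists_eq_left]
  | fn f ts ih =>
    simp only [subst_fn, occurs_fn_iff, List.mem_map, exists_exists_and_eq_and]
    constructor
    · rintro ⟨t, ht, hx⟩
      obtain ⟨y, hy, hx⟩ := (ih t ht).1 hx
      exact ⟨y, ⟨t, ht, hy⟩, hx⟩
    · rintro ⟨y, ⟨t, ht, hy⟩, hx⟩
      exact ⟨t, ht, (ih t ht).2 ⟨y, hy, hx⟩⟩

theorem isGround_iff {t : Term F} : IsGround t ↔ ∀ x, ¬ Occurs x t := by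
  induction t using Term.ind with
  | var z => exact ⟨(nomatch ·), fun h => absurd Occurs.var (h z)⟩
  | fn f ts ih =>
    simp only [occurs_fn_iff, not_exists, not_and]
    constructor
    · rintro ⟨_, _, hts⟩ x t ht
      exact (ih t ht).1 (hts t ht) x
    · exact fun h => IsGround.fn f ts fun t ht => (ih t ht).2 fun x => h x t ht

theorem finite_occurs (t : Term F) : {x | Occurs x t}.Finite := by
  induction t using Term.ind with
  | var z => simp [occurs_var_iff]
  | fn f ts ih =>
    have : {x | Occurs x (fn f ts)} = ⋃ t ∈ {t | t ∈ ts}, {x | Occurs x t} := by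
      ext x; simp [occurs_fn_iff]
    rw [this]
    exact (List.finite_toSet ts).biUnion ih

def varsOf (ts : List (Term F)) : Set ℕ := {x | ∃ t ∈ ts, Occurs x t}

theorem varsOf_cons (t : Term F) (ts : List (Term F)) :
    varsOf (t :: ts) = {x | Occurs x t} ∪ varsOf ts := by
  ext x; simp [varsOf]

theorem varsOf_append (as bs : List (Term F)) : varsOf (as ++ bs) = varsOf as ∪ varsOf bs := by
  ext x; simp [varsOf, or_and_right, exists_or]

theorem setOf_occurs_fn (f : F) (ts : List (Term F)) : {x | Occurs x (fn f ts)} = varsOf ts := by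
  ext x; simp [varsOf, occurs_fn_iff]

theorem finite_varsOf (ts : List (Term F)) : (varsOf ts).Finite := by
  induction ts with
  | nil => simp [varsOf]
  | cons t ts ih => rw [varsOf_cons]; exact (finite_occurs t).union ih

def VarsBelow (N : ℕ) (t : Term F) : Prop := ∀ x, Occurs x t → x < N

theorem exists_varsBelow (ts : List (Term F)) : ∃ N, ∀ t ∈ ts, VarsBelow N t := by
  obtain ⟨M, hM⟩ := (finite_varsOf ts).bddAbove
  exact ⟨M + 1, fun t ht x hx => Nat.lt_succ_of_le (hM ⟨t, ht, hx⟩)⟩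

def size : Term F → ℕ
  | var _ => 1
  | fn _ ts => (ts.map size).sum + 1

theorem size_pos (t : Term F) : 0 < size t := by
  cases t <;> simp [size]

theorem size_lt_size_fn {t : Term F} {f : F} {ts : List (Term F)} (ht : t ∈ ts) :
    size t < size (fn f ts) := by
  rw [size]
  have := List.le_sum_of_mem (List.mem_map_of_mem (f := size) ht)
  omega

theorem size_le_size_subst {x : ℕ} {t : Term F} (θ : ℕ → Term F) (hx : Occurs x t) :
    size (θ x) ≤ size (subst θ t) := by
  induction hx with
  | var => rfl
  | @fn f ts t ht _ ih =>
    rw [subst_fn]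
    exact ih.trans (size_lt_size_fn (List.mem_map_of_mem ht)).le

theorem not_occurs_of_subst_eq {x : ℕ} {b : Term F} {θ : ℕ → Term F}
    (h : θ x = subst θ b) (hb : b ≠ var x) : ¬ Occurs x b := by
  rintro (_ | @⟨f, ts, t, ht, hx⟩)
  · exact hb rfl
  · have : size (θ x) < size (θ x) := calc
        size (θ x) ≤ size (subst θ t) := size_le_size_subst θ hx
        _ < size (fn f (ts.map (subst θ))) := size_lt_size_fn (List.mem_map_of_mem ht)
        _ = size (θ x) := by rw [← subst_fn, h]
    exact lt_irrefl _ this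

theorem subst_update_var_of_not_occurs {x : ℕ} {b u : Term F} (hx : ¬ Occurs x u) :
    subst (Function.update var x b) u = u := by
  conv_rhs => rw [← subst_id u]
  exact subst_congr fun y hy => Function.update_of_ne (fun h : y = x => hx (h ▸ hy)) _ _

theorem subst_update_var_comp {x : ℕ} {b : Term F} {θ : ℕ → Term F} (h : θ x = subst θ b) :
    (fun y => subst θ (Function.update var x b y)) = θ := by
  funext y
  by_cases hy : y = x
  · subst hy; simp [h]
  · simp [hy]

theorem occurs_subst_update_var {x y : ℕ} {b u : Term F} (hx : ¬ Occurs x b)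
    (h : Occurs y (subst (Function.update var x b) u)) : y ≠ x ∧ (Occurs y u ∨ Occurs y b) := by
  obtain ⟨z, hz, hy⟩ := occurs_subst_iff.1 h
  by_cases hzx : z = x
  · subst hzx
    rw [Function.update_self] at hy
    exact ⟨fun h => hx (h ▸ hy), Or.inr hy⟩
  · rw [Function.update_of_ne hzx, occurs_var_iff] at hy
    subst hy
    exact ⟨hzx, Or.inl hz⟩

def Unifies (θ : ℕ → Term F) (as bs : List (Term F)) : Prop :=
  as.map (subst θ) = bs.map (subst θ)

def IsMGU (μ : ℕ → Term F) (as bs : List (Term F)) : Prop :=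
  Unifies μ as bs ∧ ∀ θ, Unifies θ as bs → ∃ δ : ℕ → Term F, ∀ x, θ x = subst δ (μ x)

theorem unifies_cons {θ : ℕ → Term F} {a b : Term F} {as bs : List (Term F)} :
    Unifies θ (a :: as) (b :: bs) ↔ subst θ a = subst θ b ∧ Unifies θ as bs := by
  simp [Unifies]

theorem unifies_map_subst {θ σ : ℕ → Term F} {as bs : List (Term F)} :
    Unifies θ (as.map (subst σ)) (bs.map (subst σ)) ↔ Unifies (fun x => subst θ (σ x)) as bs := by
  simp only [Unifies, List.map_map, Function.comp_def, subst_comp]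

theorem unifies_fn_cons {θ : ℕ → Term F} {f : F} {ss ts as bs : List (Term F)}
    (hlen : ss.length = ts.length) :
    Unifies θ (fn f ss :: as) (fn f ts :: bs) ↔ Unifies θ (ss ++ as) (ts ++ bs) := by
  rw [unifies_cons]
  simp only [Unifies, subst_fn, fn.injEq, true_and, List.map_append]
  exact ⟨fun ⟨h₁, h₂⟩ => by rw [h₁, h₂], fun h => List.append_inj h (by simpa using hlen)⟩

theorem Unifies.map_subst_update {θ : ℕ → Term F} {x : ℕ} {b : Term F} {as bs : List (Term F)}
    (h : Unifies θ as bs) (hx : θ x = subst θ b) :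
    Unifies θ (as.map (subst (Function.update var x b)))
      (bs.map (subst (Function.update var x b))) :=
  unifies_map_subst.2 (by rwa [subst_update_var_comp hx])

theorem IsMGU.symm {μ : ℕ → Term F} {as bs : List (Term F)} (h : IsMGU μ as bs) :
    IsMGU μ bs as :=
  ⟨h.1.symm, fun θ hθ => h.2 θ hθ.symm⟩

theorem IsMGU.cons_self {μ : ℕ → Term F} {a : Term F} {as bs : List (Term F)}
    (h : IsMGU μ as bs) : IsMGU μ (a :: as) (a :: bs) :=
  ⟨unifies_cons.2 ⟨rfl, h.1⟩, fun θ hθ => h.2 θ (unifies_cons.1 hθ).2⟩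

theorem IsMGU.fn_cons {μ : ℕ → Term F} {f : F} {ss ts as bs : List (Term F)}
    (hlen : ss.length = ts.length) (h : IsMGU μ (ss ++ as) (ts ++ bs)) :
    IsMGU μ (fn f ss :: as) (fn f ts :: bs) :=
  ⟨(unifies_fn_cons hlen).2 h.1, fun θ hθ => h.2 θ ((unifies_fn_cons hlen).1 hθ)⟩

theorem IsMGU.var_cons {μ : ℕ → Term F} {x : ℕ} {b : Term F} {as bs : List (Term F)}
    (hx : ¬ Occurs x b)
    (h : IsMGU μ (as.map (subst (Function.update var x b)))
      (bs.map (subst (Function.update var x b)))) :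
    IsMGU (fun y => subst μ (Function.update var x b y)) (var x :: as) (b :: bs) := by
  refine ⟨unifies_cons.2 ⟨?_, unifies_map_subst.1 h.1⟩, fun θ hθ => ?_⟩
  · show subst μ (Function.update var x b x) = _
    rw [← subst_comp, subst_update_var_of_not_occurs hx, Function.update_self]
  · obtain ⟨hθx, hθ⟩ := unifies_cons.1 hθ
    obtain ⟨δ, hδ⟩ := h.2 θ (hθ.map_subst_update hθx)
    refine ⟨δ, fun y => ?_⟩
    rw [subst_comp, ← funext hδ, ← congrFun (subst_update_var_comp hθx) y]

theorem varsOf_map_subst_update_ssubset {x : ℕ} {b : Term F} {as bs : List (Term F)}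
    (hx : ¬ Occurs x b) :
    varsOf (as.map (subst (Function.update var x b))) ∪
        varsOf (bs.map (subst (Function.update var x b))) ⊂
      varsOf (var x :: as) ∪ varsOf (b :: bs) := by
  have hsub : ∀ us : List (Term F), varsOf (us.map (subst (Function.update var x b))) ⊆
      (varsOf us ∪ {y | Occurs y b}) \ {x} := by
    rintro us y ⟨_, ht, hy⟩
    obtain ⟨u, hu, rfl⟩ := List.mem_map.1 ht
    obtain ⟨hyx, hy | hy⟩ := occurs_subst_update_var hx hy
    exacts [⟨Or.inl ⟨u, hu, hy⟩, hyx⟩, ⟨Or.inr hy, hyx⟩]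
  have hxmem : x ∈ varsOf (var x :: as) ∪ varsOf (b :: bs) :=
    Or.inl ⟨var x, List.mem_cons_self, Occurs.var⟩
  refine (Set.union_subset ((hsub as).trans ?_) ((hsub bs).trans ?_)).trans_ssubset
    (Set.sdiff_singleton_ssubset.2 hxmem)
  all_goals
    refine Set.sdiff_subset_sdiff_left ?_
    rw [varsOf_cons, varsOf_cons]
    tauto_set

-- Robinson's unification terminates: eliminating a variable removes it from the problem, and
-- decomposing or deleting an equation keeps the variables and shrinks the problem.
noncomputable def unifMeasure (as bs : List (Term F)) : ℕ ×ₗ ℕ :=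
  toLex ((varsOf as ∪ varsOf bs).ncard, (as.map size).sum + (bs.map size).sum)

theorem unifMeasure_comm (as bs : List (Term F)) : unifMeasure as bs = unifMeasure bs as := by
  rw [unifMeasure, unifMeasure, Set.union_comm, Nat.add_comm]

theorem unifMeasure_lt_of_subset {as bs as' bs' : List (Term F)}
    (hv : varsOf as' ∪ varsOf bs' ⊆ varsOf as ∪ varsOf bs)
    (hs : (as'.map size).sum + (bs'.map size).sum < (as.map size).sum + (bs.map size).sum) :
    unifMeasure as' bs' < unifMeasure as bs :=
  Prod.Lex.toLex_lt_toLex'.2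
    ⟨Set.ncard_le_ncard hv ((finite_varsOf as).union (finite_varsOf bs)), fun _ => hs⟩

theorem unifMeasure_cons_self_lt (a : Term F) (as bs : List (Term F)) :
    unifMeasure as bs < unifMeasure (a :: as) (a :: bs) := by
  refine unifMeasure_lt_of_subset ?_ ?_
  · simp only [varsOf_cons]
    exact Set.union_subset_union Set.subset_union_right Set.subset_union_right
  · have := size_pos a
    simp only [List.map_cons, List.sum_cons]
    omega

theorem unifMeasure_fn_cons_lt (f : F) (ss ts as bs : List (Term F)) :
    unifMeasure (ss ++ as) (ts ++ bs) < unifMeasure (fn f ss :: as) (fn f ts :: bs) := by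
  refine unifMeasure_lt_of_subset ?_ ?_
  · simp only [varsOf_append, varsOf_cons, setOf_occurs_fn, subset_refl]
  · simp only [List.map_append, List.sum_append, List.map_cons, List.sum_cons, size]
    omega

theorem unifMeasure_var_cons_lt {x : ℕ} {b : Term F} (as bs : List (Term F))
    (hx : ¬ Occurs x b) :
    unifMeasure (as.map (subst (Function.update var x b)))
      (bs.map (subst (Function.update var x b))) < unifMeasure (var x :: as) (b :: bs) :=
  Prod.Lex.toLex_lt_toLex.2 <| Or.inl <| Set.ncard_lt_ncard (varsOf_map_subst_update_ssubset hx)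
    ((finite_varsOf _).union (finite_varsOf _))

theorem exists_isMGU (as bs : List (Term F)) (h : ∃ θ, Unifies θ as bs) :
    ∃ μ, IsMGU μ as bs := by
  generalize hm : unifMeasure as bs = m
  induction m using WellFoundedLT.induction generalizing as bs with
  | _ m ih =>
  subst hm
  obtain ⟨θ, h⟩ := h
  match as, bs, h with
  | [], [], _ => exact ⟨var, rfl, fun θ _ => ⟨θ, fun _ => rfl⟩⟩
  | [], _ :: _, h | _ :: _, [], h => simp [Unifies] at h
  | a :: as, b :: bs, h =>
    obtain ⟨hab, hθ⟩ := unifies_cons.1 h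
    by_cases heq : a = b
    · subst heq
      obtain ⟨μ, hμ⟩ := ih _ (unifMeasure_cons_self_lt a as bs) as bs ⟨θ, hθ⟩ rfl
      exact ⟨μ, hμ.cons_self⟩
    cases a with
    | var x =>
      have hx := not_occurs_of_subst_eq hab (Ne.symm heq)
      obtain ⟨μ, hμ⟩ := ih _ (unifMeasure_var_cons_lt as bs hx) _ _
        ⟨θ, hθ.map_subst_update hab⟩ rfl
      exact ⟨_, hμ.var_cons hx⟩
    | fn f ss =>
    cases b with
    | var y =>
      have hy := not_occurs_of_subst_eq hab.symm heq
      have hlt := unifMeasure_var_cons_lt bs as hy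
      rw [unifMeasure_comm (var y :: bs)] at hlt
      obtain ⟨μ, hμ⟩ := ih _ hlt _ _ ⟨θ, Unifies.map_subst_update hθ.symm hab.symm⟩ rfl
      exact ⟨_, (hμ.var_cons hy).symm⟩
    | fn g ts =>
      simp only [subst_fn, fn.injEq] at hab
      obtain ⟨rfl, hab⟩ := hab
      have hlen : ss.length = ts.length := by simpa using congrArg List.length hab
      obtain ⟨μ, hμ⟩ := ih _ (unifMeasure_fn_cons_lt f ss ts as bs) _ _
        ⟨θ, (unifies_fn_cons hlen).1 h⟩ rfl
      exact ⟨μ, hμ.fn_cons hlen⟩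

end Term

section Rewriting

variable {F : Type} {S : Set (Term F × Term F)}

theorem rew_of_mem {a b : Term F} (h : (a, b) ∈ S) : Rew S a b := by
  simpa only [subst_id] using Rew.rule h Term.var

theorem rew_subst {s t : Term F} (σ : ℕ → Term F) (h : Rew S s t) :
    Rew S (subst σ s) (subst σ t) := by
  induction h with
  | rule hmem τ => rw [subst_comp, subst_comp]; exact Rew.rule hmem _
  | ctxt f as bs _ ih =>
    simpa only [subst_fn, List.map_append, List.map_cons] using Rew.ctxt f _ _ ih

theorem rstar_subst {s t : Term F} (σ : ℕ → Term F) (h : RStar S s t) :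
    RStar S (subst σ s) (subst σ t) :=
  Relation.ReflTransGen.lift (subst σ) (fun _ _ => rew_subst σ) _ _ h

theorem rstar_ctxt {a b : Term F} (f : F) (as bs : List (Term F)) (h : RStar S a b) :
    RStar S (fn f (as ++ a :: bs)) (fn f (as ++ b :: bs)) :=
  Relation.ReflTransGen.lift (fun c => fn f (as ++ c :: bs)) (fun _ _ => Rew.ctxt f as bs) _ _ h

theorem rstar_fn {ss ts : List (Term F)} (f : F) (h : List.Forall₂ (RStar S) ss ts) :
    RStar S (fn f ss) (fn f ts) := by
  suffices ∀ as, RStar S (fn f (as ++ ss)) (fn f (as ++ ts)) by simpa using this []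
  induction h with
  | nil => exact fun _ => Relation.ReflTransGen.refl
  | @cons a b ss ts hab _ ih =>
    intro as
    have := ih (as ++ [b])
    simp only [List.append_assoc, List.cons_append, List.nil_append] at this
    exact (rstar_ctxt f as ss hab).trans this

theorem rstar_subst_of_forall {σ σ' : ℕ → Term F} {t : Term F}
    (h : ∀ x, Occurs x t → RStar S (σ x) (σ' x)) : RStar S (subst σ t) (subst σ' t) := by
  induction t using Term.ind with
  | var x => exact h x Occurs.var
  | fn f ts ih =>
    rw [subst_fn, subst_fn]
    refine rstar_fn f (List.forall₂_map_left_iff.2 (List.forall₂_map_right_iff.2 ?_))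
    exact List.forall₂_same.2 fun t ht => ih t ht fun x hx => h x (Occurs.fn ht hx)

theorem joinable_symm {s t : Term F} (h : Joinable S s t) : Joinable S t s :=
  let ⟨u, hs, ht⟩ := h; ⟨u, ht, hs⟩

theorem joinable_subst {s t : Term F} (σ : ℕ → Term F) (h : Joinable S s t) :
    Joinable S (subst σ s) (subst σ t) :=
  let ⟨u, hs, ht⟩ := h; ⟨subst σ u, rstar_subst σ hs, rstar_subst σ ht⟩

theorem joinable_fn_of_disjoint {a a' b b' : Term F} (f : F) (as mid bs : List (Term F))
    (ha : Rew S a a') (hb : Rew S b b') :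
    Joinable S (fn f (as ++ a' :: (mid ++ b :: bs))) (fn f (as ++ a :: (mid ++ b' :: bs))) := by
  refine ⟨fn f (as ++ a' :: (mid ++ b' :: bs)), .single ?_, .single (Rew.ctxt f as _ ha)⟩
  simpa using Rew.ctxt f (as ++ a' :: mid) bs hb

end Rewriting

section Positions

variable {F : Type}

theorem List.set_eq_of_getElem?_eq_some {α : Type*} {ts : List α} {i : ℕ} {u : α} (e : α)
    (h : ts[i]? = some u) : ts.set i e = ts.take i ++ e :: ts.drop (i + 1) := by
  rw [List.set_eq_take_append_cons_drop, if_pos (List.getElem?_eq_some_iff.1 h).1]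

theorem List.eq_take_append_cons_drop_of_getElem? {α : Type*} {ts : List α} {i : ℕ} {u : α}
    (h : ts[i]? = some u) : ts = ts.take i ++ u :: ts.drop (i + 1) := by
  obtain ⟨hi, rfl⟩ := List.getElem?_eq_some_iff.1 h
  rw [← List.drop_eq_getElem_cons hi, List.take_append_drop]

theorem List.append_cons_eq_append_cons {α : Type*} {as bs as' bs' : List α} {a b : α}
    (h : as ++ a :: bs = as' ++ b :: bs') :
    (as = as' ∧ a = b ∧ bs = bs') ∨ (∃ mid, as' = as ++ a :: mid ∧ bs = mid ++ b :: bs') ∨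
      ∃ mid, as = as' ++ b :: mid ∧ bs' = mid ++ a :: bs := by
  rcases List.append_eq_append_iff.1 h with ⟨_ | ⟨c, mid⟩, rfl, h'⟩ | ⟨_ | ⟨c, mid⟩, rfl, h'⟩
  · simp only [List.nil_append, List.cons.injEq] at h'
    exact Or.inl ⟨by simp, h'⟩
  · simp only [List.cons_append, List.cons.injEq] at h'
    exact Or.inr (Or.inl ⟨mid, by rw [h'.1], h'.2⟩)
  · simp only [List.nil_append, List.cons.injEq] at h'
    exact Or.inl ⟨by simp, h'.1.symm, h'.2.symm⟩
  · simp only [List.cons_append, List.cons.injEq] at h'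
    exact Or.inr (Or.inr ⟨mid, by rw [h'.1], h'.2⟩)

theorem replAt_det {t e v₁ v₂ : Term F} {p : List ℕ} (h₁ : ReplAt t p e v₁)
    (h₂ : ReplAt t p e v₂) : v₁ = v₂ := by
  induction h₁ generalizing v₂ with
  | refl => cases h₂; rfl
  | step hget _ ih =>
    cases h₂ with
    | step hget' hrepl =>
      cases hget.symm.trans hget'
      rw [ih hrepl]

theorem exists_replAt {t d : Term F} {p : List ℕ} (h : SubtAt t p d) (e : Term F) :
    ∃ v, ReplAt t p e v := by
  induction h with
  | refl => exact ⟨e, ReplAt.refl _ _⟩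
  | step hget _ ih => obtain ⟨w, hw⟩ := ih; exact ⟨_, ReplAt.step hget hw⟩

theorem replAt_self {t d : Term F} {p : List ℕ} (h : SubtAt t p d) : ReplAt t p d t := by
  induction h with
  | refl => exact ReplAt.refl _ _
  | @step f ts i u _ _ hget _ ih =>
    have hset : ts.set i u = ts := by
      rw [List.set_eq_of_getElem?_eq_some u hget, ← List.eq_take_append_cons_drop_of_getElem? hget]
    simpa only [hset] using ReplAt.step (f := f) hget ih

theorem subtAt_subst {t d : Term F} {p : List ℕ} (σ : ℕ → Term F) (h : SubtAt t p d) :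
    SubtAt (subst σ t) p (subst σ d) := by
  induction h with
  | refl => exact SubtAt.refl _
  | step hget _ ih => rw [subst_fn]; exact SubtAt.step (by simp [hget]) ih

theorem replAt_subst {t e v : Term F} {p : List ℕ} (σ : ℕ → Term F) (h : ReplAt t p e v) :
    ReplAt (subst σ t) p (subst σ e) (subst σ v) := by
  induction h with
  | refl => exact ReplAt.refl _ _
  | step hget _ ih => simpa [List.map_set] using ReplAt.step (by simp [hget]) ih

theorem replAt_of_append {t m e w v : Term F} {p q : List ℕ} (hm : SubtAt t p m)
    (hw : ReplAt m q e w) (hv : ReplAt t (p ++ q) e v) : ReplAt t p w v := by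
  induction hm generalizing v with
  | refl => rw [replAt_det hv hw]; exact ReplAt.refl _ _
  | step hget _ ih =>
    cases hv with
    | step hget' hrepl =>
      cases hget.symm.trans hget'
      exact ReplAt.step hget (ih hw hrepl)

theorem occurs_of_subtAt {t d : Term F} {p : List ℕ} {x : ℕ} (h : SubtAt t p d)
    (hx : Occurs x d) : Occurs x t := by
  induction h with
  | refl => exact hx
  | step hget _ ih => exact Occurs.fn (List.mem_of_getElem? hget) (ih hx)

theorem exists_subtAt_of_occurs {t : Term F} {x : ℕ} (h : Occurs x t) :
    ∃ p, SubtAt t p (var x) := by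
  induction h with
  | var => exact ⟨[], SubtAt.refl _⟩
  | fn hmem _ ih =>
    obtain ⟨p, hp⟩ := ih
    obtain ⟨i, hi⟩ := List.getElem?_of_mem hmem
    exact ⟨i :: p, SubtAt.step hi hp⟩

theorem eq_of_subtAt_nil {t d : Term F} (h : SubtAt t [] d) : d = t := by
  cases h; rfl

theorem subtAt_subst_cases {σ : ℕ → Term F} {p : List ℕ} {l d : Term F}
    (h : SubtAt (subst σ l) p d) :
    (∃ q₁ q₂ x, p = q₁ ++ q₂ ∧ SubtAt l q₁ (var x) ∧ SubtAt (σ x) q₂ d) ∨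
      (∃ l', SubtAt l p l' ∧ (∀ x, l' ≠ var x) ∧ subst σ l' = d) := by
  induction p generalizing l with
  | nil =>
    rw [eq_of_subtAt_nil h]
    cases l with
    | var x => exact Or.inl ⟨[], [], x, rfl, SubtAt.refl _, SubtAt.refl _⟩
    | fn f ls => exact Or.inr ⟨fn f ls, SubtAt.refl _, fun _ => nofun, rfl⟩
  | cons i p ih =>
    cases l with
    | var x => exact Or.inl ⟨[], i :: p, x, rfl, SubtAt.refl _, h⟩
    | fn f ls =>
      rw [subst_fn] at h
      cases h with
      | step hget hsub =>
        rw [List.getElem?_map, Option.map_eq_some_iff] at hget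
        obtain ⟨u, hu, rfl⟩ := hget
        rcases ih hsub with ⟨q₁, q₂, x, rfl, hq₁, hq₂⟩ | ⟨l', hl', hnv, hd⟩
        · exact Or.inl ⟨i :: q₁, q₂, x, rfl, SubtAt.step hu hq₁, hq₂⟩
        · exact Or.inr ⟨l', SubtAt.step hu hl', hnv, hd⟩

end Positions

section RewritingAtPositions

variable {F : Type} {S : Set (Term F × Term F)}

theorem rew_of_subtAt {s d e v : Term F} {p : List ℕ} (hd : SubtAt s p d) (hv : ReplAt s p e v)
    (h : Rew S d e) : Rew S s v := by
  induction hd generalizing v with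
  | refl => cases hv; exact h
  | @step f ts i u _ _ hget _ ih =>
    cases hv with
    | step hget' hrepl =>
      cases hget.symm.trans hget'
      rw [List.set_eq_of_getElem?_eq_some _ hget]
      conv_lhs => rw [List.eq_take_append_cons_drop_of_getElem? hget]
      exact Rew.ctxt f _ _ (ih hrepl h)

theorem exists_subtAt_of_rew {s v : Term F} (h : Rew S s v) :
    ∃ p l r σ, (l, r) ∈ S ∧ SubtAt s p (subst σ l) ∧ ReplAt s p (subst σ r) v := by
  induction h with
  | rule hmem σ => exact ⟨[], _, _, σ, hmem, SubtAt.refl _, ReplAt.refl _ _⟩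
  | @ctxt s v f as bs _ ih =>
    obtain ⟨p, l, r, σ, hmem, hd, hv⟩ := ih
    have hget : (as ++ s :: bs)[as.length]? = some s := by simp
    refine ⟨as.length :: p, l, r, σ, hmem, SubtAt.step hget hd, ?_⟩
    simpa using ReplAt.step (f := f) hget hv

theorem rstar_replAt_subst_var {t v w : Term F} {σ : ℕ → Term F} {x : ℕ} {q : List ℕ}
    (hq : SubtAt t q (var x)) (hv : ReplAt (subst σ t) q w v) (hw : Rew S (σ x) w) :
    RStar S v (subst (Function.update σ x w) t) := by
  -- Mark the rewritten occurrence by a fresh variable `y`: `v = t'(σ[y ↦ w])`.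
  obtain ⟨y, hy⟩ := exists_varsBelow [t]
  have hyt : ¬ Occurs y t := fun h => lt_irrefl y (hy t (by simp) y h)
  have hxy : x ≠ y := fun h => hyt (h ▸ occurs_of_subtAt hq Occurs.var)
  have hupd : ∀ τ : ℕ → Term F, subst (Function.update τ y w) t = subst τ t :=
    fun τ => subst_congr fun z hz => Function.update_of_ne (fun h : z = y => hyt (h ▸ hz)) _ _
  obtain ⟨t', ht'⟩ := exists_replAt hq (var y)
  have hv' : v = subst (Function.update σ y w) t' := by
    have := replAt_subst (Function.update σ y w) ht'
    rw [hupd, subst_var, Function.update_self] at this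
    exact replAt_det hv this
  have ht'' : subst (Function.update (Function.update σ x w) y w) t' =
      subst (Function.update σ x w) t := by
    have h₁ := replAt_subst (Function.update (Function.update σ x w) y w) ht'
    have h₂ := replAt_self (subtAt_subst (Function.update (Function.update σ x w) y w) hq)
    rw [subst_var, Function.update_self] at h₁
    rw [subst_var, Function.update_of_ne hxy, Function.update_self] at h₂
    rw [← hupd, replAt_det h₁ h₂]
  rw [hv', ← ht'']
  refine rstar_subst_of_forall fun z _ => ?_
  by_cases hzy : z = y
  · subst hzy; simp only [Function.update_self]; exact .refl
  by_cases hzx : z = x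
  · subst hzx; simp only [Function.update_of_ne hzy, Function.update_self]; exact .single hw
  · simp only [Function.update_of_ne hzy, Function.update_of_ne hzx]; exact .refl

end RewritingAtPositions

namespace RedOrder

variable {F : Type} (ro : RedOrder F)

theorem asymm {s t : Term F} (h : ro.gt s t) : ¬ ro.gt t s :=
  fun h' => ro.irrefl s (ro.trans h h')

theorem gt_replAt {t a b u v : Term F} {p : List ℕ} (hab : ro.gt a b) (hu : ReplAt t p a u)
    (hv : ReplAt t p b v) : ro.gt u v := by
  induction hu generalizing v with
  | refl => cases hv; exact hab
  | @step f ts i _ _ _ _ hget _ ih =>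
    cases hv with
    | step hget' hrepl =>
      cases hget.symm.trans hget'
      rw [List.set_eq_of_getElem?_eq_some _ hget, List.set_eq_of_getElem?_eq_some _ hget]
      exact ro.ctxt_mono f _ _ (ih hab hrepl)

-- Writing `C[·]` for `u[·]_q`, otherwise `c > C[c] > C[C[c]] > ⋯` would descend forever.
theorem not_gt_replAt {u d : Term F} {q : List ℕ} (hq : SubtAt u q d) (c : Term F) :
    ∀ {c'}, ReplAt u q c c' → ¬ ro.gt c c' := by
  induction c using ro.wf.induction with
  | _ c ih =>
  intro c' hc' hgt
  obtain ⟨c'', hc''⟩ := exists_replAt hq c'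
  exact ih c' hgt hc'' (ro.gt_replAt hgt hc' hc'')

theorem occurs_of_gt {s t : Term F} {x : ℕ} (h : ro.gt s t) (hx : Occurs x t) : Occurs x s := by
  -- With `θ = [x ↦ s]`, `s > tθ` while `tθ` contains `s` at an occurrence of `x`.
  by_contra hxs
  set θ := Function.update Term.var x s
  obtain ⟨q, hq⟩ := exists_subtAt_of_occurs hx
  have hq' : SubtAt (subst θ t) q s := by simpa [θ] using subtAt_subst θ hq
  have hst : ro.gt s (subst θ t) := by
    simpa only [θ, subst_update_var_of_not_occurs hxs] using ro.subst_mono θ h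
  exact ro.not_gt_replAt hq' s (replAt_self hq') hst

theorem isGround_of_gt {s t : Term F} (hs : IsGround s) (h : ro.gt s t) : IsGround t :=
  isGround_iff.2 fun x hx => isGround_iff.1 hs x (ro.occurs_of_gt h hx)

end RedOrder

section OrderedRewriting

variable {F : Type} {E : Set (Term F × Term F)}

theorem symcl_symm {u v : Term F} (h : (u, v) ∈ symcl E) : (v, u) ∈ symcl E :=
  h.symm

theorem mem_ordInst {gt : Term F → Term F → Prop} {u v : Term F} {σ : ℕ → Term F}
    (h : (u, v) ∈ symcl E) (hgt : gt (subst σ u) (subst σ v)) :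
    (subst σ u, subst σ v) ∈ ordInst gt E :=
  ⟨u, v, σ, h, rfl, hgt⟩

theorem gt_of_mem_ordInst {gt : Term F → Term F → Prop} {a b : Term F}
    (h : (a, b) ∈ ordInst gt E) : gt a b := by
  obtain ⟨u, v, σ, -, heq, hgt⟩ := h
  obtain ⟨rfl, rfl⟩ := Prod.mk.inj heq
  exact hgt

variable (ro : RedOrder F)

theorem subst_mem_ordInst {a b : Term F} (h : (a, b) ∈ ordInst ro.gt E) (σ : ℕ → Term F) :
    (subst σ a, subst σ b) ∈ ordInst ro.gt E := by
  obtain ⟨u, v, τ, huv, heq, hgt⟩ := h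
  obtain ⟨rfl, rfl⟩ := Prod.mk.inj heq
  have := ro.subst_mono σ hgt
  simp only [subst_comp] at this ⊢
  exact mem_ordInst huv this

theorem exists_subtAt_of_rew_ordInst {s v : Term F} (h : Rew (ordInst ro.gt E) s v) :
    ∃ p l r τ, (l, r) ∈ symcl E ∧ ro.gt (subst τ l) (subst τ r) ∧
      SubtAt s p (subst τ l) ∧ ReplAt s p (subst τ r) v := by
  obtain ⟨p, l₀, r₀, τ₀, h₀, hd, hv⟩ := exists_subtAt_of_rew h
  obtain ⟨l, r, τ, hlr, heq, hgt⟩ := subst_mem_ordInst ro h₀ τ₀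
  obtain ⟨hl, hr⟩ := Prod.mk.inj heq
  exact ⟨p, l, r, τ, hlr, hgt, hl ▸ hd, hr ▸ hv⟩

theorem gt_of_rew {s t : Term F} (h : Rew (ordInst ro.gt E) s t) : ro.gt s t :=
  let ⟨_, _, _, _, _, hgt, hl, hr⟩ := exists_subtAt_of_rew_ordInst ro h
  ro.gt_replAt hgt (replAt_self hl) hr

theorem isGround_of_rew {s t : Term F} (hs : IsGround s) (h : Rew (ordInst ro.gt E) s t) :
    IsGround t :=
  ro.isGround_of_gt hs (gt_of_rew ro h)

theorem isGround_of_rstar {s t : Term F} (hs : IsGround s) (h : RStar (ordInst ro.gt E) s t) :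
    IsGround t := by
  induction h with
  | refl => exact hs
  | tail _ hst ih => exact isGround_of_rew ro ih hst

theorem wellFounded_flip_rew : WellFounded (flip (Rew (ordInst ro.gt E))) :=
  Subrelation.wf (fun h => gt_of_rew ro h) ro.wf

end OrderedRewriting

section CriticalPairs

variable {F : Type}

def blockSwap (N : ℕ) : ℕ ≃ ℕ :=
  Function.Involutive.toPerm (fun x => if x < N then x + N else if x < 2 * N then x - N else x)
    (fun x => by dsimp only; split_ifs <;> omega)

theorem blockSwap_of_lt {N x : ℕ} (h : x < N) : blockSwap N x = x + N := if_pos h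

theorem exists_renaming_apart (N : ℕ) (σ τ : ℕ → Term F) :
    ∃ π θ : ℕ → Term F, IsRenaming π ∧
      (∀ t, VarsBelow N t → (∀ x, Occurs x (subst π t) → N ≤ x) ∧
        subst θ (subst π t) = subst τ t) ∧
      ∀ t, VarsBelow N t → subst θ t = subst σ t := by
  refine ⟨fun x => var (blockSwap N x), fun z => if z < N then σ z else τ (z - N),
    ⟨blockSwap N, fun _ => rfl⟩, fun t ht => ⟨fun x hx => ?_, ?_⟩,
    fun t ht => subst_congr fun x hx => if_pos (ht x hx)⟩
  · obtain ⟨y, hy, hxy⟩ := occurs_subst_iff.1 hx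
    rw [occurs_var_iff, blockSwap_of_lt (ht y hy)] at hxy
    omega
  · rw [subst_comp]
    refine subst_congr fun x hx => ?_
    simp [blockSwap_of_lt (ht x hx)]

variable {gt : Term F → Term F → Prop} {E : Set (Term F × Term F)}

theorem mem_ECP_of {l₁ r₁ l r l' c : Term F} {π μ : ℕ → Term F} {p : List ℕ}
    (h₁ : (l₁, r₁) ∈ symcl E) (h : (l, r) ∈ symcl E) (hπ : IsRenaming π)
    (hdisj : ∀ x, Occurs x (subst π l₁) ∨ Occurs x (subst π r₁) → ¬ (Occurs x l ∨ Occurs x r))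
    (hl' : SubtAt l p l') (hnv : ∀ x, l' ≠ var x) (hμ : IsMGU μ [subst π l₁] [l'])
    (hor₁ : ¬ gt (subst μ (subst π r₁)) (subst μ (subst π l₁)))
    (hor : ¬ gt (subst μ r) (subst μ l)) (hc : ReplAt l p (subst π r₁) c) :
    (subst μ c, subst μ r) ∈ ECP gt E := by
  simp only [IsMGU, Unifies, List.map_cons, List.map_nil, List.cons.injEq, and_true] at hμ
  refine ⟨(l₁, r₁), (l, r), π, var, μ, p, l', c, h₁, h, hπ, ⟨Equiv.refl ℕ, fun _ => rfl⟩, ?_⟩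
  simp only [subst_id]
  exact ⟨hdisj, hl', hnv, hμ.1, hμ.2, hor₁, hor, hc, trivial⟩

variable {ro : RedOrder F}

theorem exists_ECP_instance {l₁ r₁ l r l' v : Term F} {σ τ : ℕ → Term F} {p : List ℕ}
    (h₁ : (l₁, r₁) ∈ symcl E) (h : (l, r) ∈ symcl E)
    (hgt₁ : ro.gt (subst τ l₁) (subst τ r₁)) (hgt : ro.gt (subst σ l) (subst σ r))
    (hl' : SubtAt l p l') (hnv : ∀ x, l' ≠ var x) (hunif : subst σ l' = subst τ l₁)
    (hv : ReplAt (subst σ l) p (subst τ r₁) v) :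
    ∃ c₁ c₂, (c₁, c₂) ∈ ECP ro.gt E ∧
      ∃ δ : ℕ → Term F, subst δ c₁ = v ∧ subst δ c₂ = subst σ r := by
  obtain ⟨N, hN⟩ := exists_varsBelow [l₁, r₁, l, r]
  simp only [List.mem_cons, List.not_mem_nil, or_false, forall_eq_or_imp, forall_eq] at hN
  obtain ⟨hNl₁, hNr₁, hNl, hNr⟩ := hN
  obtain ⟨π, θ, hπ, hπθ, hθ⟩ := exists_renaming_apart N σ τ
  have hθu : subst θ (subst π l₁) = subst θ l' := by
    rw [(hπθ l₁ hNl₁).2, hθ l' fun x hx => hNl x (occurs_of_subtAt hl' hx), hunif]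
  obtain ⟨μ, hμ⟩ := exists_isMGU [subst π l₁] [l'] ⟨θ, by simp [Unifies, hθu]⟩
  obtain ⟨δ, hδ⟩ := hμ.2 θ (by simp [Unifies, hθu])
  have hθδ : ∀ t, subst δ (subst μ t) = subst θ t := fun t => by rw [subst_comp, ← funext hδ]
  obtain ⟨c, hc⟩ := exists_replAt hl' (subst π r₁)
  refine ⟨subst μ c, subst μ r, mem_ECP_of h₁ h hπ ?_ hl' hnv hμ ?_ ?_ hc, δ, ?_, ?_⟩
  · have hπN : ∀ x, Occurs x (subst π l₁) ∨ Occurs x (subst π r₁) → N ≤ x := by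
      rintro x (hx | hx)
      exacts [(hπθ l₁ hNl₁).1 x hx, (hπθ r₁ hNr₁).1 x hx]
    rintro x hx (hx' | hx')
    exacts [(hπN x hx).not_gt (hNl x hx'), (hπN x hx).not_gt (hNr x hx')]
  -- The orientation conditions hold because their `δ`-instances are oriented the other way.
  · intro hcon
    have := ro.subst_mono δ hcon
    rw [hθδ, hθδ, (hπθ r₁ hNr₁).2, (hπθ l₁ hNl₁).2] at this
    exact ro.asymm hgt₁ this
  · intro hcon
    have := ro.subst_mono δ hcon
    rw [hθδ, hθδ, hθ r hNr, hθ l hNl] at this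
    exact ro.asymm hgt this
  · have := replAt_subst θ hc
    rw [hθ l hNl, (hπθ r₁ hNr₁).2] at this
    rw [hθδ]
    exact replAt_det this hv
  · rw [hθδ, hθ r hNr]

end CriticalPairs

section GroundConfluence

variable {F : Type}

def ECPJoinableOrInstance (gt : Term F → Term F → Prop) (E : Set (Term F × Term F)) : Prop :=
  ∀ s t : Term F, (s, t) ∈ ECP gt E →
    Joinable (ordInst gt E) s t ∨
      ∃ s' t' : Term F, (s', t') ∈ symcl E ∧ ∃ σ : ℕ → Term F, s = subst σ s' ∧ t = subst σ t'

variable {E : Set (Term F × Term F)} {ro : RedOrder F}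

theorem joinable_of_isGround_instance (hgt : GroundTotal ro.gt) {u v : Term F}
    (h : (u, v) ∈ symcl E) (σ : ℕ → Term F) (hu : IsGround (subst σ u))
    (hv : IsGround (subst σ v)) :
    Joinable (ordInst ro.gt E) (subst σ u) (subst σ v) := by
  by_cases heq : subst σ u = subst σ v
  · exact ⟨_, heq ▸ .refl, .refl⟩
  rcases hgt _ _ hu hv heq with huv | hvu
  · exact ⟨_, .single (rew_of_mem (mem_ordInst h huv)), .refl⟩
  · exact ⟨_, .refl, .single (rew_of_mem (mem_ordInst (symcl_symm h) hvu))⟩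

theorem joinable_of_variable_overlap (hgt : GroundTotal ro.gt) {l r v w : Term F}
    {σ : ℕ → Term F} {x : ℕ} {q : List ℕ} (h : (l, r) ∈ symcl E)
    (hgtσ : ro.gt (subst σ l) (subst σ r)) (hg : IsGround (subst σ l))
    (hq : SubtAt l q (var x)) (hw : Rew (ordInst ro.gt E) (σ x) w)
    (hv : ReplAt (subst σ l) q w v) :
    Joinable (ordInst ro.gt E) (subst σ r) v := by
  have hvl : RStar (ordInst ro.gt E) v (subst (Function.update σ x w) l) :=
    rstar_replAt_subst_var hq hv hw
  have hrr : RStar (ordInst ro.gt E) (subst σ r) (subst (Function.update σ x w) r) := by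
    refine rstar_subst_of_forall fun z _ => ?_
    by_cases hzx : z = x
    · subst hzx; rw [Function.update_self]; exact .single hw
    · rw [Function.update_of_ne hzx]; exact .refl
  have hgv : IsGround v :=
    isGround_of_rew ro hg (rew_of_subtAt (by simpa using subtAt_subst σ hq) hv hw)
  obtain ⟨u, hlu, hru⟩ := joinable_of_isGround_instance hgt h _
    (isGround_of_rstar ro hgv hvl) (isGround_of_rstar ro (ro.isGround_of_gt hg hgtσ) hrr)
  exact ⟨u, hrr.trans hru, hvl.trans hlu⟩

theorem joinable_of_root_peak (hgt : GroundTotal ro.gt) (hcp : ECPJoinableOrInstance ro.gt E)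
    {s u v : Term F} (hsu : (s, u) ∈ ordInst ro.gt E) (hs : IsGround s)
    (hsv : Rew (ordInst ro.gt E) s v) : Joinable (ordInst ro.gt E) u v := by
  obtain ⟨l, r, σ, hlr, heq, hgtσ⟩ := hsu
  obtain ⟨rfl, rfl⟩ := Prod.mk.inj heq
  have hv : IsGround v := isGround_of_rew ro hs hsv
  obtain ⟨p, l₁, r₁, τ, h₁, hgt₁, hd, hrepl⟩ := exists_subtAt_of_rew_ordInst ro hsv
  rcases subtAt_subst_cases hd with ⟨q₁, q₂, x, rfl, hq₁, hq₂⟩ | ⟨l', hl', hnv, hunif⟩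
  · obtain ⟨w, hw⟩ := exists_replAt hq₂ (subst τ r₁)
    have hxw : Rew (ordInst ro.gt E) (σ x) w :=
      rew_of_subtAt hq₂ hw (rew_of_mem (mem_ordInst h₁ hgt₁))
    have hσx : SubtAt (subst σ l) q₁ (σ x) := by simpa using subtAt_subst σ hq₁
    exact joinable_of_variable_overlap hgt hlr hgtσ hs hq₁ hxw (replAt_of_append hσx hw hrepl)
  · obtain ⟨c₁, c₂, hc, δ, rfl, hr⟩ := exists_ECP_instance h₁ hlr hgt₁ hgtσ hl' hnv hunif hrepl
    rw [← hr] at hgtσ ⊢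
    rcases hcp _ _ hc with hj | ⟨s', t', hst, γ, rfl, rfl⟩
    · exact joinable_symm (joinable_subst δ hj)
    · simp only [subst_comp] at hv hgtσ ⊢
      exact joinable_symm (joinable_of_isGround_instance hgt hst _ hv (ro.isGround_of_gt hs hgtσ))

theorem joinable_of_ground_peak (hgt : GroundTotal ro.gt) (hcp : ECPJoinableOrInstance ro.gt E)
    {s u v : Term F} (hs : IsGround s) (hsu : Rew (ordInst ro.gt E) s u)
    (hsv : Rew (ordInst ro.gt E) s v) : Joinable (ordInst ro.gt E) u v := by
  induction hsu generalizing v with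
  | rule hmem σ => exact joinable_of_root_peak hgt hcp (subst_mem_ordInst ro hmem σ) hs hsv
  | @ctxt s₀ u₀ f as bs h₀ ih =>
    have hs₀ : IsGround s₀ :=
      isGround_iff.2 fun x hx => isGround_iff.1 hs x (Occurs.fn (by simp) hx)
    generalize hs' : fn f (as ++ s₀ :: bs) = s' at hsv
    cases hsv with
    | rule hmem σ =>
      refine joinable_symm (joinable_of_root_peak hgt hcp (subst_mem_ordInst ro hmem σ)
        (hs' ▸ hs) (hs' ▸ Rew.ctxt f as bs h₀))
    | ctxt f' as' bs' h₁ =>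
      obtain ⟨rfl, hslots⟩ := fn.inj hs'
      rcases List.append_cons_eq_append_cons hslots with
        ⟨rfl, rfl, rfl⟩ | ⟨mid, rfl, rfl⟩ | ⟨mid, rfl, rfl⟩
      · obtain ⟨w, hu₀w, hv₁w⟩ := ih hs₀ h₁
        exact ⟨_, rstar_ctxt f as bs hu₀w, rstar_ctxt f as bs hv₁w⟩
      · simpa using joinable_fn_of_disjoint f as mid bs' h₀ h₁
      · simpa using joinable_symm (joinable_fn_of_disjoint f as' mid bs h₁ h₀)

end GroundConfluence

/-- ground confluence criterion via extended critical pairs. -/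
theorem ground_confluent_of_ECP {F : Type} (ro : RedOrder F)
    (hgt : GroundTotal ro.gt) (E : Set (Term F × Term F))
    (hE : ∀ s t : Term F, (s, t) ∈ E → ro.gt s t ∨ (t, s) ∈ E)
    (hcp : ∀ s t : Term F, (s, t) ∈ ECP ro.gt E →
      Joinable (ordInst ro.gt E) s t ∨
      ∃ s' t' : Term F, (s', t') ∈ symcl E ∧
        ∃ σ : ℕ → Term F, s = subst σ s' ∧ t = subst σ t') :
    ∀ t u v : Term F, IsGround t →
      RStar (ordInst ro.gt E) t u → RStar (ordInst ro.gt E) t v →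
      Joinable (ordInst ro.gt E) u v :=
  fun _ _ _ ht htu htv => newman (wellFounded_flip_rew ro) (isGround_of_rew ro)
    (joinable_of_ground_peak hgt hcp) ht htu htv
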